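/- arXiv:math/0607691 — 3 statements merged into one kernel-verified Lean document; each statement's English description precedes it below -/
import Mathlib

section
/- (The differential preserves the Alexander grading and drops the Maslov grading by one.) Let Γ be a grid diagram of size n, let x, y be generators, and let r ∈ R_{x,y} be an empty rectangle, i.e. W(1_r) = B(1_r) = 0 and P_x(1_r) + P_y(1_r) = 1. Then A(x) = A(y), and M(x) − M(y) = 1 for any function M from generators to ℤ satisfying M(u) − M(v) = P_u(D) + P_v(D) − 2·W(D) whenever a 2-chain D connects u to v. -/
open Finset

/-- A grid diagram of size `n`: permutations `O` (white dots) and `X` (black dots)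
of `ZMod n`, with `O b ≠ X b` in every row `b`. The cell `C(a,b)` in column `a` and
row `b` contains a white dot iff `a = O b` and a black dot iff `a = X b`. -/
structure GridDiagram (n : ℕ) where
  O : Equiv.Perm (ZMod n)
  X : Equiv.Perm (ZMod n)
  ne : ∀ b, O b ≠ X b

variable {n : ℕ}

/-- Indicator function (with values in `ℤ`) of the point set
`{(σ b, b)}` of the generator given by the permutation `σ`. -/
def genInd (σ : Equiv.Perm (ZMod n)) (p : ZMod n × ZMod n) : ℤ :=
  if σ p.2 = p.1 then 1 else 0

/-- The mixed difference `δD` of a 2-chain `D` at a lattice point. -/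
def mixedDiff (D : ZMod n × ZMod n → ℤ) (p : ZMod n × ZMod n) : ℤ :=
  D p - D (p.1 - 1, p.2) - D (p.1, p.2 - 1) + D (p.1 - 1, p.2 - 1)

/-- The 2-chain `D` connects the generator `σ` to the generator `τ`. -/
abbrev Connects (D : ZMod n × ZMod n → ℤ) (σ τ : Equiv.Perm (ZMod n)) : Prop :=
  ∀ p, mixedDiff D p = genInd σ p - genInd τ p

/-- Local multiplicity `p_p(D)` of a 2-chain at a lattice point. -/
def locMult (D : ZMod n × ZMod n → ℤ) (p : ZMod n × ZMod n) : ℚ :=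
  (D p + D (p.1 - 1, p.2) + D (p.1, p.2 - 1) + D (p.1 - 1, p.2 - 1)) / 4

/-- `P_x(D)`: total local multiplicity of `D` along the generator `σ`. -/
def Pgen [NeZero n] (σ : Equiv.Perm (ZMod n)) (D : ZMod n × ZMod n → ℤ) : ℚ :=
  ∑ b : ZMod n, locMult D (σ b, b)

/-- `W(D)`: total multiplicity of `D` at the white dots. -/
def Wmult [NeZero n] (Γ : GridDiagram n) (D : ZMod n × ZMod n → ℤ) : ℤ :=
  ∑ b : ZMod n, D (Γ.O b, b)

/-- `B(D)`: total multiplicity of `D` at the black dots. -/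
def Bmult [NeZero n] (Γ : GridDiagram n) (D : ZMod n × ZMod n → ℤ) : ℤ :=
  ∑ b : ZMod n, D (Γ.X b, b)

/-- Membership in the cyclic interval `[a₁, a₂) ⊆ ZMod n`. -/
abbrev inCyc (a₁ a₂ a : ZMod n) : Prop := (a - a₁).val < (a₂ - a₁).val

/-- A quadruple `((a₁,a₂),(b₁,b₂))` determines a rectangle when both cyclic
intervals `[a₁,a₂)`, `[b₁,b₂)` are proper and nonempty. -/
abbrev IsRect (q : (ZMod n × ZMod n) × ZMod n × ZMod n) : Prop :=
  q.1.1 ≠ q.1.2 ∧ q.2.1 ≠ q.2.2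

/-- Indicator 2-chain of the rectangle with column interval `[a₁,a₂)` and
row interval `[b₁,b₂)`. -/
def rectInd (q : (ZMod n × ZMod n) × ZMod n × ZMod n) (p : ZMod n × ZMod n) : ℤ :=
  if inCyc q.1.1 q.1.2 p.1 ∧ inCyc q.2.1 q.2.2 p.2 then 1 else 0

/-- The rectangle determined by a quadruple, as its set of cells. -/
def rectCells [NeZero n] (q : (ZMod n × ZMod n) × ZMod n × ZMod n) :
    Finset (ZMod n × ZMod n) :=
  univ.filter fun p => inCyc q.1.1 q.1.2 p.1 ∧ inCyc q.2.1 q.2.2 p.2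

/-- `q` determines an empty rectangle in `R_{σ,τ}`: a rectangle whose indicator
2-chain connects `σ` to `τ`, with `W(1_r) = B(1_r) = 0` and
`P_σ(1_r) + P_τ(1_r) = 1`. -/
abbrev EmptyRect [NeZero n] (Γ : GridDiagram n) (σ τ : Equiv.Perm (ZMod n))
    (q : (ZMod n × ZMod n) × ZMod n × ZMod n) : Prop :=
  IsRect q ∧ Connects (rectInd q) σ τ ∧ Wmult Γ (rectInd q) = 0 ∧
    Bmult Γ (rectInd q) = 0 ∧ Pgen σ (rectInd q) + Pgen τ (rectInd q) = 1

/-- The number of empty rectangles in `R_{σ,τ}`. -/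
def emptyRectCount [NeZero n] (Γ : GridDiagram n) (σ τ : Equiv.Perm (ZMod n)) : ℕ :=
  (univ.filter fun q : (ZMod n × ZMod n) × ZMod n × ZMod n => EmptyRect Γ σ τ q).card

/-- The differential `∂` on `C(Γ)`, the `𝔽₂`-vector space freely generated by the
generators (elements of which are recorded as functions from generators to `ℤ/2`):
on a generator `x`, `∂x = Σ_y Σ_{empty rectangles r ∈ R_{x,y}} y`. -/
def delC [NeZero n] (Γ : GridDiagram n) (c : Equiv.Perm (ZMod n) → ZMod 2) :
    Equiv.Perm (ZMod n) → ZMod 2 :=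
  fun τ => ∑ σ : Equiv.Perm (ZMod n), c σ * (emptyRectCount Γ σ τ : ZMod 2)

/-- Minus the winding number of the oriented link diagram around the lattice
point `p`, computed column by column using the representatives `{0, …, n-1}`. -/
def windA [NeZero n] (Γ : GridDiagram n) (p : ZMod n × ZMod n) : ℤ :=
  ∑ j ∈ Finset.range p.1.val,
    (if (Γ.X.symm (j : ZMod n)).val < (Γ.O.symm (j : ZMod n)).val then (1 : ℤ) else -1) *
      (if min (Γ.X.symm (j : ZMod n)).val (Γ.O.symm (j : ZMod n)).val < p.2.val ∧
          p.2.val ≤ max (Γ.X.symm (j : ZMod n)).val (Γ.O.symm (j : ZMod n)).val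
        then 1 else 0)

/-- Sum of the values of `a = windA` at the four corners of the cell `C(c)`. -/
def cornerA [NeZero n] (Γ : GridDiagram n) (c : ZMod n × ZMod n) : ℤ :=
  windA Γ c + windA Γ (c.1 + 1, c.2) + windA Γ (c.1, c.2 + 1) +
    windA Γ (c.1 + 1, c.2 + 1)

/-- The Alexander grading
`A(x) = Σ_{p ∈ x} a(p) − (1/8)·Σ_{i,j} a(c_{i,j}) − (n−1)/2`. -/
def alexQ [NeZero n] (Γ : GridDiagram n) (σ : Equiv.Perm (ZMod n)) : ℚ :=
  ((∑ b : ZMod n, windA Γ (σ b, b) : ℤ) : ℚ) -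
    (1 / 8 : ℚ) * ((∑ b : ZMod n, (cornerA Γ (Γ.O b, b) + cornerA Γ (Γ.X b, b)) : ℤ) : ℚ) -
    ((n : ℚ) - 1) / 2

/-- The differential `∂` on `C(Γ)` as a linear endomorphism over `𝔽₂ = ZMod 2`. -/
def delL [NeZero n] (Γ : GridDiagram n) :
    (Equiv.Perm (ZMod n) → ZMod 2) →ₗ[ZMod 2] (Equiv.Perm (ZMod n) → ZMod 2) where
  toFun := delC Γ
  map_add' c₁ c₂ := by
    funext τ
    simp [delC, add_mul, Finset.sum_add_distrib]
  map_smul' m c := by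
    funext τ
    simp [delC, Finset.mul_sum, mul_assoc]

/-- The dimension over `𝔽₂` of the homology `ker ∂ / im ∂` of `(C(Γ), ∂)`. -/
noncomputable def homDim [NeZero n] (Γ : GridDiagram n) : ℕ :=
  Module.finrank (ZMod 2)
    (LinearMap.ker (delL Γ) ⧸
      Submodule.comap (LinearMap.ker (delL Γ)).subtype (LinearMap.range (delL Γ)))

/-- The subspace of `C(Γ)` spanned by the generators of Alexander grading `s`. -/
def gradedSub [NeZero n] (Γ : GridDiagram n) (s : ℚ) :
    Submodule (ZMod 2) (Equiv.Perm (ZMod n) → ZMod 2) where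
  carrier := {c | ∀ σ, alexQ Γ σ ≠ s → c σ = 0}
  add_mem' := by
    intro c d hc hd σ hs
    simp [hc σ hs, hd σ hs]
  zero_mem' := by intro σ _; rfl
  smul_mem' := by
    intro m c hc σ hs
    simp [hc σ hs]

/-- The dimension over `𝔽₂` of the homology of `(C(Γ), ∂)` in Alexander grading `s`. -/
noncomputable def gradedHomDim [NeZero n] (Γ : GridDiagram n) (s : ℚ) : ℕ :=
  Module.finrank (ZMod 2)
    (↥(LinearMap.ker (delL Γ) ⊓ gradedSub Γ s) ⧸
      Submodule.comap (LinearMap.ker (delL Γ) ⊓ gradedSub Γ s).subtype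
        (Submodule.map (delL Γ) (gradedSub Γ s)))

/-- The monomial `U₁^{O₁(r)} ⋯ Uₙ^{Oₙ(r)}` attached to a rectangle, where
`O_i(r)` is the multiplicity of the rectangle at the white dot in row `i`. -/
noncomputable def rectU [NeZero n] (Γ : GridDiagram n) (q : (ZMod n × ZMod n) × ZMod n × ZMod n) :
    MvPolynomial (ZMod n) (ZMod 2) :=
  ∏ i : ZMod n, MvPolynomial.X i ^ (rectInd q (Γ.O i, i)).toNat

/-- The differential `∂⁻` on `C⁻(Γ)`, the free `𝔽₂[U₁,…,Uₙ]`-module on the generators: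
`∂⁻x = Σ_y Σ_{r ∈ R_{x,y}, P_x(1_r)+P_y(1_r)=1} U₁^{O₁(r)} ⋯ Uₙ^{Oₙ(r)} · y`. -/
noncomputable def delMinus [NeZero n] (Γ : GridDiagram n)
    (c : Equiv.Perm (ZMod n) → MvPolynomial (ZMod n) (ZMod 2)) :
    Equiv.Perm (ZMod n) → MvPolynomial (ZMod n) (ZMod 2) :=
  fun τ => ∑ σ : Equiv.Perm (ZMod n),
    c σ * ∑ q ∈ univ.filter (fun q : (ZMod n × ZMod n) × ZMod n × ZMod n =>
        IsRect q ∧ Connects (rectInd q) σ τ ∧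
          Pgen σ (rectInd q) + Pgen τ (rectInd q) = 1),
      rectU Γ q

section AuxStatement11
variable [NeZero n]

def wterm (Γ : GridDiagram n) (j : ℕ) (y : ZMod n) : ℤ :=
  (if (Γ.X.symm (j : ZMod n)).val < (Γ.O.symm (j : ZMod n)).val then (1 : ℤ) else -1) *
    (if min (Γ.X.symm (j : ZMod n)).val (Γ.O.symm (j : ZMod n)).val < y.val ∧
        y.val ≤ max (Γ.X.symm (j : ZMod n)).val (Γ.O.symm (j : ZMod n)).val
      then 1 else 0)

lemma windA_def (Γ : GridDiagram n) (p : ZMod n × ZMod n) :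
    windA Γ p = ∑ j ∈ Finset.range p.1.val, wterm Γ j p.2 := rfl

lemma wterm_eq (Γ : GridDiagram n) (j : ℕ) (y : ZMod n) :
    wterm Γ j y = (if (Γ.X.symm (j : ZMod n)).val < y.val then 1 else 0)
      - (if (Γ.O.symm (j : ZMod n)).val < y.val then 1 else 0) := by
  unfold wterm
  split_ifs <;> omega

lemma sum_range_eq_sum_zmod (f : ZMod n → ℤ) :
    ∑ j ∈ Finset.range n, f (j : ZMod n) = ∑ a : ZMod n, f a := by
  refine Finset.sum_nbij' (fun j => ((j : ℕ) : ZMod n)) (fun a => a.val) ?_ ?_ ?_ ?_ ?_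
  · intro a _; exact mem_univ _
  · intro a _; exact Finset.mem_range.2 (ZMod.val_lt a)
  · intro a ha; simp [ZMod.val_natCast, Nat.mod_eq_of_lt (Finset.mem_range.1 ha)]
  · intro a _; simp [ZMod.natCast_val, ZMod.cast_id]
  · intro a _; rfl

lemma sum_indicator_perm (σ : Equiv.Perm (ZMod n)) (k : ℕ) (hk : k ≤ n) :
    ∑ j ∈ Finset.range n, (if (σ (j : ZMod n)).val < k then (1:ℤ) else 0) = k := by
  rw [sum_range_eq_sum_zmod (fun a => if (σ a).val < k then (1:ℤ) else 0)]
  rw [Equiv.sum_comp σ (fun a => if a.val < k then (1:ℤ) else 0)]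
  rw [← sum_range_eq_sum_zmod (fun a => if a.val < k then (1:ℤ) else 0)]
  have key : ∀ m : ℕ, m ≤ n → ∑ j ∈ Finset.range m,
      (if ((j : ZMod n)).val < k then (1:ℤ) else 0) = (min m k : ℤ) := by
    intro m hm
    induction m with
    | zero => simp
    | succ m ih =>
      rw [Finset.sum_range_succ, ih (by omega)]
      rw [ZMod.val_natCast, Nat.mod_eq_of_lt (by omega)]
      split_ifs <;> push_cast <;> omega
  rw [key n le_rfl]
  omega

lemma sum_wterm (Γ : GridDiagram n) (y : ZMod n) :
    ∑ j ∈ Finset.range n, wterm Γ j y = 0 := by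
  simp only [wterm_eq, Finset.sum_sub_distrib]
  rw [sum_indicator_perm Γ.X.symm y.val (le_of_lt (ZMod.val_lt y)),
    sum_indicator_perm Γ.O.symm y.val (le_of_lt (ZMod.val_lt y)), sub_self]

lemma windA_succ (Γ : GridDiagram n) (c y : ZMod n) :
    windA Γ (c + 1, y) = windA Γ (c, y) + wterm Γ c.val y := by
  rw [windA_def, windA_def]
  have hc : c + 1 = ((c.val + 1 : ℕ) : ZMod n) := by
    push_cast [ZMod.natCast_val, ZMod.cast_id]
    ring
  by_cases h : c.val + 1 = n
  · have h1 : (c + 1 : ZMod n).val = 0 := by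
      rw [hc, ZMod.val_natCast, h, Nat.mod_self]
    have h2 := sum_wterm Γ y
    rw [show Finset.range n = Finset.range (c.val + 1) by rw [h], Finset.sum_range_succ] at h2
    simp only [h1, Finset.range_zero, Finset.sum_empty]
    omega
  · have h1 : (c + 1 : ZMod n).val = c.val + 1 := by
      rw [hc, ZMod.val_natCast, Nat.mod_eq_of_lt (by have := ZMod.val_lt c; omega)]
    simp only [h1]
    rw [Finset.sum_range_succ]

lemma dplus_windA (Γ : GridDiagram n) (c r : ZMod n) :
    windA Γ (c, r) - windA Γ (c + 1, r) - windA Γ (c, r + 1) + windA Γ (c + 1, r + 1)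
      = (if r = Γ.X.symm c then 1 else 0) - (if r = Γ.O.symm c then 1 else 0) := by
  rw [windA_succ Γ c r, windA_succ Γ c (r + 1)]
  have hcv : ((c.val : ℕ) : ZMod n) = c := by simp [ZMod.natCast_val, ZMod.cast_id]
  have hx : (r = Γ.X.symm c) ↔ r.val = (Γ.X.symm c).val :=
    ⟨fun h => by rw [h], fun h => ZMod.val_injective n h⟩
  have hy : (r = Γ.O.symm c) ↔ r.val = (Γ.O.symm c).val :=
    ⟨fun h => by rw [h], fun h => ZMod.val_injective n h⟩
  have hr : r + 1 = ((r.val + 1 : ℕ) : ZMod n) := by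
    push_cast [ZMod.natCast_val, ZMod.cast_id]; ring
  have hu := ZMod.val_lt (Γ.X.symm c)
  have hv := ZMod.val_lt (Γ.O.symm c)
  have hrv := ZMod.val_lt r
  have h1 : (r + 1).val = (r.val + 1) % n := by rw [hr, ZMod.val_natCast]
  rw [wterm_eq, wterm_eq, hcv]
  simp only [hx, hy]
  by_cases h : r.val + 1 = n
  · rw [h1, h, Nat.mod_self]
    split_ifs <;> omega
  · rw [h1, Nat.mod_eq_of_lt (by omega)]
    split_ifs <;> omega

lemma sum_shift (f : ZMod n × ZMod n → ℤ) (a b : ZMod n) :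
    ∑ p : ZMod n × ZMod n, f (p.1 + a, p.2 + b) = ∑ p : ZMod n × ZMod n, f p := by
  apply Fintype.sum_bijective (fun p : ZMod n × ZMod n => (p.1 + a, p.2 + b))
    ((Equiv.prodCongr (Equiv.addRight a) (Equiv.addRight b)).bijective)
  intro p; rfl

lemma sum_by_parts (g D : ZMod n × ZMod n → ℤ) :
    ∑ p : ZMod n × ZMod n, g p * mixedDiff D p =
      ∑ p : ZMod n × ZMod n, D p *
        (g p - g (p.1 + 1, p.2) - g (p.1, p.2 + 1) + g (p.1 + 1, p.2 + 1)) := by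
  have h1 := sum_shift (fun p => D p * g (p.1 + 1, p.2)) (-1) 0
  have h2 := sum_shift (fun p => D p * g (p.1, p.2 + 1)) 0 (-1)
  have h3 := sum_shift (fun p => D p * g (p.1 + 1, p.2 + 1)) (-1) (-1)
  simp only [add_zero, neg_add_cancel_right, ← sub_eq_add_neg, sub_add_cancel] at h1 h2 h3
  have e0 : ∑ p : ZMod n × ZMod n, g p * D p = ∑ p : ZMod n × ZMod n, D p * g p :=
    Finset.sum_congr rfl (fun p _ => mul_comm _ _)
  have e1 : ∑ p : ZMod n × ZMod n, g p * D (p.1 - 1, p.2)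
      = ∑ p : ZMod n × ZMod n, D p * g (p.1 + 1, p.2) := by
    rw [← h1]; exact Finset.sum_congr rfl (fun p _ => mul_comm _ _)
  have e2 : ∑ p : ZMod n × ZMod n, g p * D (p.1, p.2 - 1)
      = ∑ p : ZMod n × ZMod n, D p * g (p.1, p.2 + 1) := by
    rw [← h2]; exact Finset.sum_congr rfl (fun p _ => mul_comm _ _)
  have e3 : ∑ p : ZMod n × ZMod n, g p * D (p.1 - 1, p.2 - 1)
      = ∑ p : ZMod n × ZMod n, D p * g (p.1 + 1, p.2 + 1) := by
    rw [← h3]; exact Finset.sum_congr rfl (fun p _ => mul_comm _ _)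
  simp only [mixedDiff, mul_sub, mul_add, Finset.sum_add_distrib, Finset.sum_sub_distrib]
  rw [e0, e1, e2, e3]

lemma sum_genInd_mul (σ : Equiv.Perm (ZMod n)) (f : ZMod n × ZMod n → ℤ) :
    ∑ p : ZMod n × ZMod n, genInd σ p * f p = ∑ b : ZMod n, f (σ b, b) := by
  rw [Fintype.sum_prod_type, Finset.sum_comm]
  apply Finset.sum_congr rfl
  intro b _
  simp only [genInd, ite_mul, one_mul, zero_mul]
  rw [Finset.sum_ite_eq univ (σ b) (fun a => f (a, b))]
  simp

lemma sum_dotX (Γ : GridDiagram n) (D : ZMod n × ZMod n → ℤ) :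
    ∑ p : ZMod n × ZMod n, D p * (if p.2 = Γ.X.symm p.1 then 1 else 0) = Bmult Γ D := by
  rw [Fintype.sum_prod_type]
  have : ∀ a : ZMod n, ∑ b : ZMod n, D (a, b) * (if b = Γ.X.symm a then 1 else 0)
      = D (a, Γ.X.symm a) := by
    intro a
    simp only [mul_ite, mul_one, mul_zero]
    rw [Finset.sum_ite_eq' univ (Γ.X.symm a) (fun b => D (a, b))]
    simp
  simp only [this]
  rw [← Equiv.sum_comp Γ.X (fun a => D (a, Γ.X.symm a))]
  unfold Bmult
  apply Finset.sum_congr rfl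
  intro b _
  rw [Equiv.symm_apply_apply]

lemma sum_dotO (Γ : GridDiagram n) (D : ZMod n × ZMod n → ℤ) :
    ∑ p : ZMod n × ZMod n, D p * (if p.2 = Γ.O.symm p.1 then 1 else 0) = Wmult Γ D := by
  rw [Fintype.sum_prod_type]
  have : ∀ a : ZMod n, ∑ b : ZMod n, D (a, b) * (if b = Γ.O.symm a then 1 else 0)
      = D (a, Γ.O.symm a) := by
    intro a
    simp only [mul_ite, mul_one, mul_zero]
    rw [Finset.sum_ite_eq' univ (Γ.O.symm a) (fun b => D (a, b))]
    simp
  simp only [this]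
  rw [← Equiv.sum_comp Γ.O (fun a => D (a, Γ.O.symm a))]
  unfold Wmult
  apply Finset.sum_congr rfl
  intro b _
  rw [Equiv.symm_apply_apply]

lemma wind_diff (Γ : GridDiagram n) (σ τ : Equiv.Perm (ZMod n))
    (q : (ZMod n × ZMod n) × ZMod n × ZMod n) (hconn : Connects (rectInd q) σ τ) :
    (∑ b : ZMod n, windA Γ (σ b, b)) - (∑ b : ZMod n, windA Γ (τ b, b))
      = Bmult Γ (rectInd q) - Wmult Γ (rectInd q) := by
  calc (∑ b : ZMod n, windA Γ (σ b, b)) - (∑ b : ZMod n, windA Γ (τ b, b))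
      = ∑ p : ZMod n × ZMod n, windA Γ p * mixedDiff (rectInd q) p := by
        rw [← sum_genInd_mul σ (windA Γ), ← sum_genInd_mul τ (windA Γ),
          ← Finset.sum_sub_distrib]
        apply Finset.sum_congr rfl
        intro p _
        rw [hconn p]
        ring
    _ = ∑ p : ZMod n × ZMod n, rectInd q p *
          (windA Γ p - windA Γ (p.1 + 1, p.2) - windA Γ (p.1, p.2 + 1)
            + windA Γ (p.1 + 1, p.2 + 1)) := sum_by_parts (windA Γ) (rectInd q)
    _ = ∑ p : ZMod n × ZMod n, (rectInd q p * (if p.2 = Γ.X.symm p.1 then 1 else 0)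
          - rectInd q p * (if p.2 = Γ.O.symm p.1 then 1 else 0)) := by
        apply Finset.sum_congr rfl
        rintro ⟨a, b⟩ _
        rw [← mul_sub]
        congr 1
        exact dplus_windA Γ a b
    _ = Bmult Γ (rectInd q) - Wmult Γ (rectInd q) := by
        rw [Finset.sum_sub_distrib, sum_dotX Γ (rectInd q), sum_dotO Γ (rectInd q)]

end AuxStatement11

/-- If `r ∈ R_{x,y}` is an empty rectangle (`W(1_r) = B(1_r) = 0`
and `P_x(1_r) + P_y(1_r) = 1`), then `A(x) = A(y)` and `M(x) − M(y) = 1` for any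
function `M` from generators to `ℤ` satisfying the relative Maslov grading formula. -/
theorem differential_preserves_alexander_drops_maslov (n : ℕ) [NeZero n] (hn : 2 ≤ n)
    (Γ : GridDiagram n) (σ τ : Equiv.Perm (ZMod n))
    (q : (ZMod n × ZMod n) × ZMod n × ZMod n)
    (hq : IsRect q) (hconn : Connects (rectInd q) σ τ)
    (hW : Wmult Γ (rectInd q) = 0) (hB : Bmult Γ (rectInd q) = 0)
    (hP : Pgen σ (rectInd q) + Pgen τ (rectInd q) = 1) :
    alexQ Γ σ = alexQ Γ τ ∧
    ∀ M : Equiv.Perm (ZMod n) → ℤ,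
      (∀ (x y : Equiv.Perm (ZMod n)) (D : ZMod n × ZMod n → ℤ), Connects D x y →
        (M x : ℚ) - (M y : ℚ) = Pgen x D + Pgen y D - 2 * (Wmult Γ D : ℚ)) →
      M σ - M τ = 1 := by
  constructor
  · have hw := wind_diff Γ σ τ q hconn
    rw [hW, hB] at hw
    have hs : (∑ b : ZMod n, windA Γ (σ b, b)) = ∑ b : ZMod n, windA Γ (τ b, b) := by omega
    unfold alexQ
    rw [hs]
  · intro M hM
    have h := hM σ τ (rectInd q) hconn
    rw [hW] at h
    push_cast at h
    have : (M σ : ℚ) - (M τ : ℚ) = 1 := by rw [h, ← hP]; ring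
    exact_mod_cast this
end

section
/- (Rectangle connectivity of generators.) Let Γ be a grid diagram of size n. For any two generators x and y there exists a finite sequence of generators x = x₁, x₂, …, x_m = y such that for each i < m there is a rectangle r_i ∈ R_{x_i, x_{i+1}} with P_{x_i}(1_{r_i}) + P_{x_{i+1}}(1_{r_i}) = 1 (i.e. a rectangle connecting x_i to x_{i+1} containing no point of x_i in its interior). -/
open Finset

variable {n : ℕ}

/-! ### Auxiliary lemmas for rectangle connectivity -/

private lemma zval_succ_rel (hn : 2 ≤ n) (x : ZMod n) :
    ((x - 1).val + 1 = n ∧ x.val = 0) ∨ x.val = (x - 1).val + 1 := by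
  haveI : NeZero n := ⟨by omega⟩
  haveI : Fact (1 < n) := ⟨by omega⟩
  have h0 : x - 1 + 1 = x := by ring
  have h1 : (x - 1 + 1).val = ((x - 1).val + (1 : ZMod n).val) % n := ZMod.val_add _ _
  rw [h0, ZMod.val_one] at h1
  have h2 : (x - 1).val < n := ZMod.val_lt _
  by_cases hc : (x - 1).val + 1 = n
  · exact Or.inl ⟨hc, by rw [h1, hc, Nat.mod_self]⟩
  · exact Or.inr (by rw [h1, Nat.mod_eq_of_lt (by omega)])

private lemma zval_ne_zero_of_ne {a₁ a₂ : ZMod n} [NeZero n] (h : a₁ ≠ a₂) :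
    (a₂ - a₁).val ≠ 0 :=
  fun h0 => h (sub_eq_zero.mp ((ZMod.val_eq_zero _).mp h0)).symm

private lemma colInd_sub (hn : 2 ≤ n) {a₁ a₂ : ZMod n} (h : a₁ ≠ a₂) (a : ZMod n) :
    ((if inCyc a₁ a₂ a then (1:ℤ) else 0) - (if inCyc a₁ a₂ (a - 1) then 1 else 0)) =
      (if a = a₁ then 1 else 0) - (if a = a₂ then 1 else 0) := by
  haveI : NeZero n := ⟨by omega⟩
  have hk0 : (a₂ - a₁).val ≠ 0 := zval_ne_zero_of_ne h
  have hkn : (a₂ - a₁).val < n := ZMod.val_lt _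
  have hun : (a - a₁).val < n := ZMod.val_lt _
  have hun' : (a - a₁ - 1).val < n := ZMod.val_lt _
  have hrel := zval_succ_rel hn (a - a₁)
  have he : a - 1 - a₁ = a - a₁ - 1 := by ring
  have h1 : (a = a₁) ↔ (a - a₁).val = 0 := by
    rw [ZMod.val_eq_zero, sub_eq_zero]
  have h2 : (a = a₂) ↔ (a - a₁).val = (a₂ - a₁).val := by
    constructor
    · rintro rfl; rfl
    · intro hv; exact sub_left_inj.mp (ZMod.val_injective n hv)
  simp only [inCyc, he, h1, h2]
  split_ifs <;> omega

private lemma inCyc_self {a₁ a₂ : ZMod n} [NeZero n] (h : a₁ ≠ a₂) : inCyc a₁ a₂ a₁ := by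
  show (a₁ - a₁).val < (a₂ - a₁).val
  rw [sub_self, ZMod.val_zero]
  exact Nat.pos_of_ne_zero (zval_ne_zero_of_ne h)

private lemma not_inCyc_self_sub_one (hn : 2 ≤ n) {a₁ a₂ : ZMod n} :
    ¬ inCyc a₁ a₂ (a₁ - 1) := by
  haveI : NeZero n := ⟨by omega⟩
  obtain ⟨m, rfl⟩ : ∃ m, n = m + 1 := ⟨n - 1, by omega⟩
  show ¬ (a₁ - 1 - a₁).val < (a₂ - a₁).val
  have h0 : a₁ - 1 - a₁ = -1 := by ring
  have h1 := ZMod.val_neg_one m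
  have h2 := ZMod.val_lt (a₂ - a₁)
  rw [h0]
  omega

private lemma not_inCyc_right {a₁ a₂ : ZMod n} : ¬ inCyc a₁ a₂ a₂ := by
  show ¬ (a₂ - a₁).val < (a₂ - a₁).val
  omega

private lemma inCyc_right_sub_one (hn : 2 ≤ n) {a₁ a₂ : ZMod n} (h : a₁ ≠ a₂) :
    inCyc a₁ a₂ (a₂ - 1) := by
  haveI : NeZero n := ⟨by omega⟩
  have hk0 : (a₂ - a₁).val ≠ 0 := zval_ne_zero_of_ne h
  have he : a₂ - 1 - a₁ = a₂ - a₁ - 1 := by ring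
  show (a₂ - 1 - a₁).val < (a₂ - a₁).val
  rw [he]
  rcases zval_succ_rel hn (a₂ - a₁) with ⟨h1, h2⟩ | h1 <;> omega

private lemma inCyc_row (hn : 2 ≤ n) (b c : ZMod n) : inCyc b (b + 1) c ↔ c = b := by
  haveI : NeZero n := ⟨by omega⟩
  haveI : Fact (1 < n) := ⟨by omega⟩
  show (c - b).val < (b + 1 - b).val ↔ _
  have h0 : b + 1 - b = 1 := by ring
  rw [h0, ZMod.val_one]
  constructor
  · intro h
    have h1 : (c - b).val = 0 := by omega
    exact sub_eq_zero.mp ((ZMod.val_eq_zero _).mp h1)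
  · rintro rfl
    rw [sub_self, ZMod.val_zero]
    omega

private lemma self_ne_add_one (hn : 2 ≤ n) (b : ZMod n) : b ≠ b + 1 := by
  haveI : Fact (1 < n) := ⟨by omega⟩
  simp only [ne_eq, left_eq_add]
  exact one_ne_zero

/-- The single-step move: multiplying by an adjacent-row transposition is realized
by a height-one rectangle with the required properties. -/
private lemma rect_step (hn : 2 ≤ n) [NeZero n] (σ : Equiv.Perm (ZMod n)) (b : ZMod n) :
    ∃ q : (ZMod n × ZMod n) × ZMod n × ZMod n,
      IsRect q ∧ Connects (rectInd q) σ (σ * Equiv.swap b (b + 1)) ∧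
      Pgen σ (rectInd q) + Pgen (σ * Equiv.swap b (b + 1)) (rectInd q) = 1 := by
  haveI : Fact (1 < n) := ⟨by omega⟩
  set τ := σ * Equiv.swap b (b + 1) with hτ
  set a₁ := σ b with ha₁
  set a₂ := σ (b + 1) with ha₂
  have hb : b ≠ b + 1 := self_ne_add_one hn b
  have ha : a₁ ≠ a₂ := fun h => hb (σ.injective h)
  have flip : ∀ u v : ZMod n, (if u = v then (1:ℤ) else 0) = (if v = u then 1 else 0) := by
    intro u v
    by_cases h : u = v
    · rw [if_pos h, if_pos h.symm]
    · rw [if_neg h, if_neg (fun hh => h hh.symm)]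
  have hτb : τ b = a₂ := by rw [hτ]; simp [Equiv.swap_apply_left, ha₂]
  have hτb1 : τ (b + 1) = a₁ := by rw [hτ]; simp [Equiv.swap_apply_right, ha₁]
  have hDZ : ∀ x c, rectInd ((a₁, a₂), (b, b + 1)) (x, c) =
      (if inCyc a₁ a₂ x then (1:ℤ) else 0) * (if c = b then 1 else 0) := by
    intro x c
    simp only [rectInd]
    by_cases hP : inCyc a₁ a₂ x <;> by_cases hQ : c = b
    · rw [if_pos ⟨hP, (inCyc_row hn b c).mpr hQ⟩, if_pos hP, if_pos hQ]; norm_num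
    · rw [if_neg (fun h => hQ ((inCyc_row hn b c).mp h.2)), if_pos hP, if_neg hQ]; norm_num
    · rw [if_neg (fun h => hP h.1), if_neg hP, if_pos hQ]; norm_num
    · rw [if_neg (fun h => hP h.1), if_neg hP, if_neg hQ]; norm_num
  refine ⟨((a₁, a₂), (b, b + 1)), ⟨ha, hb⟩, ?_, ?_⟩
  · -- Connects
    intro p
    obtain ⟨x, c⟩ := p
    have hc1 : (c - 1 = b) ↔ (c = b + 1) := by
      constructor
      · intro h; rw [← h]; ring
      · intro h; rw [h]; ring
    have key : mixedDiff (rectInd ((a₁, a₂), (b, b + 1))) (x, c) =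
        ((if inCyc a₁ a₂ x then (1:ℤ) else 0) - (if inCyc a₁ a₂ (x - 1) then 1 else 0)) *
          ((if c = b then (1:ℤ) else 0) - (if c - 1 = b then 1 else 0)) := by
      simp only [mixedDiff, hDZ]
      ring
    rw [key, colInd_sub hn ha]
    simp only [genInd]
    by_cases hcb : c = b
    · rw [if_pos hcb, if_neg (fun h : c - 1 = b => hb ((hc1.mp h ▸ hcb.symm : b = c).trans (hc1.mp h)))]
      rw [hcb, ← ha₁, hτb, flip a₁ x, flip a₂ x]
      ring
    · by_cases hcb1 : c = b + 1
      · rw [if_neg hcb, if_pos (hc1.mpr hcb1)]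
        rw [hcb1, ← ha₂, hτb1, flip a₁ x, flip a₂ x]
        ring
      · have hτc : τ c = σ c := by
          rw [hτ]; simp [Equiv.swap_apply_of_ne_of_ne hcb hcb1]
        rw [if_neg hcb, if_neg (fun h => hcb1 (hc1.mp h)), hτc]
        ring
  · -- Pgen sum
    have hc1 : ∀ c : ZMod n, (c - 1 = b) ↔ (c = b + 1) := by
      intro c
      constructor
      · intro h; rw [← h]; ring
      · intro h; rw [h]; ring
    have hval : ∀ x c, locMult (rectInd ((a₁, a₂), (b, b + 1))) (x, c) =
        ((if inCyc a₁ a₂ x then (1:ℚ) else 0) + (if inCyc a₁ a₂ (x - 1) then 1 else 0)) *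
          ((if c = b then 1 else 0) + (if c = b + 1 then 1 else 0)) / 4 := by
      intro x c
      have hcast : ∀ x c, ((rectInd ((a₁, a₂), (b, b + 1)) (x, c) : ℤ) : ℚ) =
          (if inCyc a₁ a₂ x then (1:ℚ) else 0) * (if c = b then 1 else 0) := by
        intro x c
        rw [hDZ x c]
        by_cases hP : inCyc a₁ a₂ x <;> by_cases hQ : c = b <;> simp [hP, hQ]
      simp only [locMult]
      rw [hcast, hcast, hcast, hcast]
      simp only [hc1 c]
      ring
    have hcol : ∀ x : ZMod n, (x = a₁ ∨ x = a₂) →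
        (if inCyc a₁ a₂ x then (1:ℚ) else 0) + (if inCyc a₁ a₂ (x - 1) then 1 else 0) = 1 := by
      rintro x (rfl | rfl)
      · rw [if_pos (inCyc_self ha), if_neg (not_inCyc_self_sub_one hn)]; ring
      · rw [if_neg not_inCyc_right, if_pos (inCyc_right_sub_one hn ha)]; ring
    have hP : ∀ π : Equiv.Perm (ZMod n), (π b = a₁ ∨ π b = a₂) →
        (π (b + 1) = a₁ ∨ π (b + 1) = a₂) →
        Pgen π (rectInd ((a₁, a₂), (b, b + 1))) = 1 / 2 := by
      intro π h1 h2
      unfold Pgen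
      have hterm : ∀ c : ZMod n, locMult (rectInd ((a₁, a₂), (b, b + 1))) (π c, c) =
          (if c = b then (1:ℚ)/4 else 0) + (if c = b + 1 then 1/4 else 0) := by
        intro c
        have hb' : ¬ (b + 1 = b) := fun h => hb h.symm
        rw [hval]
        by_cases hc : c = b
        · rw [hc, hcol _ h1]
          simp only [if_pos rfl, if_neg hb]
          norm_num
        · by_cases hc1' : c = b + 1
          · rw [hc1', hcol _ h2]
            simp only [if_pos rfl, if_neg hb']
            norm_num
          · simp only [if_neg hc, if_neg hc1']
            norm_num
      rw [Finset.sum_congr rfl (fun c _ => hterm c), Finset.sum_add_distrib]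
      rw [Finset.sum_ite_eq' univ b (fun _ => (1:ℚ)/4),
        Finset.sum_ite_eq' univ (b + 1) (fun _ => (1:ℚ)/4)]
      norm_num
    have hPσ := hP σ (Or.inl rfl) (Or.inr rfl)
    have hPτ := hP τ (Or.inr hτb) (Or.inl hτb1)
    rw [hPσ, hPτ]
    norm_num

/-- The one-step relation between generators. -/
private def RectStep [NeZero n] (σ τ : Equiv.Perm (ZMod n)) : Prop :=
  ∃ q : (ZMod n × ZMod n) × ZMod n × ZMod n,
    IsRect q ∧ Connects (rectInd q) σ τ ∧
    Pgen σ (rectInd q) + Pgen τ (rectInd q) = 1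

private lemma swap_mem_adj (hn : 2 ≤ n)
    (x y : ZMod n) : Equiv.swap x y ∈
      Submonoid.closure {π : Equiv.Perm (ZMod n) | ∃ b, π = Equiv.swap b (b + 1)} := by
  haveI : NeZero n := ⟨by omega⟩
  set H := Submonoid.closure {π : Equiv.Perm (ZMod n) | ∃ b, π = Equiv.swap b (b + 1)}
  suffices h : ∀ k : ℕ, ∀ x y : ZMod n, (y - x).val = k → Equiv.swap x y ∈ H from
    h _ x y rfl
  intro k
  induction k with
  | zero =>
    intro x y hk
    have : y = x := sub_eq_zero.mp ((ZMod.val_eq_zero _).mp hk)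
    subst this
    rw [Equiv.swap_self]
    exact Submonoid.one_mem H
  | succ k ih =>
    intro x y hk
    set z := y - 1 with hz
    have hyz : y = z + 1 := by rw [hz]; ring
    have hs : Equiv.swap z y ∈ H :=
      Submonoid.subset_closure ⟨z, by rw [hyz]⟩
    have hzx : (z - x).val = k := by
      have he : z - x = y - x - 1 := by rw [hz]; ring
      rcases zval_succ_rel hn (y - x) with ⟨h1, h2⟩ | h1
      · omega
      · rw [he]; omega
    have hxz : Equiv.swap x z ∈ H := ih x z hzx
    by_cases hxez : x = z
    · subst hxez
      exact hs
    · have hxy : x ≠ y := by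
        intro h; subst h
        simp only [sub_self, ZMod.val_zero] at hk
        omega
      have hconj : Equiv.swap x y = Equiv.swap z y * Equiv.swap x z * Equiv.swap z y := by
        have h1 : Equiv.swap z y x = x :=
          Equiv.swap_apply_of_ne_of_ne hxez hxy
        have h2 : Equiv.swap z y z = y := Equiv.swap_apply_left _ _
        calc Equiv.swap x y = Equiv.swap (Equiv.swap z y x) (Equiv.swap z y z) := by
              rw [h1, h2]
          _ = Equiv.swap z y * Equiv.swap x z * (Equiv.swap z y)⁻¹ :=
              Equiv.swap_apply_apply _ _ _
          _ = Equiv.swap z y * Equiv.swap x z * Equiv.swap z y := by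
              rw [Equiv.swap_inv]
      rw [hconj]
      exact mul_mem (mul_mem hs hxz) hs

private lemma adj_closure_top (hn : 2 ≤ n) :
    Submonoid.closure {π : Equiv.Perm (ZMod n) | ∃ b, π = Equiv.swap b (b + 1)} = ⊤ := by
  haveI : NeZero n := ⟨by omega⟩
  rw [eq_top_iff, ← Equiv.Perm.mclosure_isSwap]
  apply Submonoid.closure_le.2
  rintro π ⟨x, y, -, rfl⟩
  exact swap_mem_adj hn x y

private lemma reach_all (hn : 2 ≤ n) [NeZero n] (π : Equiv.Perm (ZMod n)) :
    ∀ σ : Equiv.Perm (ZMod n), Relation.ReflTransGen RectStep σ (σ * π) := by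
  have hmem : π ∈ Submonoid.closure
      {π : Equiv.Perm (ZMod n) | ∃ b, π = Equiv.swap b (b + 1)} := by
    rw [adj_closure_top hn]; exact Submonoid.mem_top π
  induction hmem using Submonoid.closure_induction with
  | mem x hx =>
    obtain ⟨b, rfl⟩ := hx
    intro σ
    exact Relation.ReflTransGen.single (rect_step hn σ b)
  | one =>
    intro σ
    rw [mul_one]
  | mul x y hx hy ihx ihy =>
    intro σ
    rw [← mul_assoc]
    exact (ihx σ).trans (ihy (σ * x))

private lemma reflTransGen_to_fin [NeZero n] {σ τ : Equiv.Perm (ZMod n)}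
    (h : Relation.ReflTransGen RectStep σ τ) :
    ∃ (m : ℕ) (f : Fin (m + 1) → Equiv.Perm (ZMod n)),
      f 0 = σ ∧ f (Fin.last m) = τ ∧
      ∀ i : Fin m, ∃ q : (ZMod n × ZMod n) × ZMod n × ZMod n,
        IsRect q ∧ Connects (rectInd q) (f i.castSucc) (f i.succ) ∧
        Pgen (f i.castSucc) (rectInd q) + Pgen (f i.succ) (rectInd q) = 1 := by
  induction h with
  | refl => exact ⟨0, fun _ => σ, rfl, rfl, fun i => i.elim0⟩
  | @tail b c hab hbc ih =>
    obtain ⟨m, f, h0, hl, hs⟩ := ih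
    refine ⟨m + 1, Fin.snoc f c, ?_, ?_, ?_⟩
    · rw [show (0 : Fin (m + 2)) = Fin.castSucc 0 from rfl, Fin.snoc_castSucc, h0]
    · rw [Fin.snoc_last]
    · intro i
      induction i using Fin.lastCases with
      | last =>
        have e1 : (Fin.last m).castSucc = Fin.castSucc (Fin.last m) := rfl
        have e2 : (Fin.last m).succ = Fin.last (m + 1) := rfl
        rw [e1, e2, Fin.snoc_castSucc, Fin.snoc_last, hl]
        exact hbc
      | cast j =>
        have e1 : (j.castSucc).castSucc = Fin.castSucc (j.castSucc) := rfl
        have e2 : (j.castSucc).succ = Fin.castSucc j.succ := (Fin.succ_castSucc j).symm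
        rw [e1, e2, Fin.snoc_castSucc, Fin.snoc_castSucc]
        exact hs j

/-- **Rectangle connectivity of generators.** Any two generators of a
grid diagram can be joined by a finite sequence of generators in which each
consecutive pair is connected by a rectangle containing no point of the initial
generator of the pair in its interior (i.e. with `P_{x_i}(1_r) + P_{x_{i+1}}(1_r) = 1`). -/
theorem generators_connected_by_rectangles (n : ℕ) [NeZero n] (hn : 2 ≤ n)
    (Γ : GridDiagram n) (σ τ : Equiv.Perm (ZMod n)) :
    ∃ (m : ℕ) (f : Fin (m + 1) → Equiv.Perm (ZMod n)),
      f 0 = σ ∧ f (Fin.last m) = τ ∧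
      ∀ i : Fin m, ∃ q : (ZMod n × ZMod n) × ZMod n × ZMod n,
        IsRect q ∧ Connects (rectInd q) (f i.castSucc) (f i.succ) ∧
        Pgen (f i.castSucc) (rectInd q) + Pgen (f i.succ) (rectInd q) = 1 := by
  have h := reach_all hn (σ⁻¹ * τ) σ
  rw [mul_inv_cancel_left] at h
  exact reflTransGen_to_fin h
end

section
/- (Uniqueness of the conformal involution of a rectangle switching opposite sides.) Let a, b > 0 and let R = {z ∈ ℂ : 0 ≤ Re z ≤ a, 0 ≤ Im z ≤ b} be the closed rectangle, with left edge L = {z ∈ R : Re z = 0}, right edge R' = {z ∈ R : Re z = a}, bottom edge Bo = {z ∈ R : Im z = 0}, and top edge T = {z ∈ R : Im z = b}. Then there is exactly one continuous map f : R → R with f ∘ f = id which is complex-differentiable on the interior of R and satisfies f(L) ⊆ R', f(R') ⊆ L, f(Bo) ⊆ T, f(T) ⊆ Bo; namely f(z) = (a + b·i) − z. -/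
/-!
Put `c = a + b i` and `h z = f z + z - c`. The edge conditions make `h` purely imaginary on the
vertical edges and real on the horizontal ones, so `h²` is real on the boundary. The maximum
modulus principle for `exp (± i h²)` makes `Im h²` vanish on the whole rectangle, and a holomorphic
function with vanishing imaginary part on a connected open set is constant. The corner `0` lies on
the left and the bottom edge, so `f 0 = c`; hence `h² ≡ 0` and `f z = c - z`.
-/

open Complex Set Bornology

theorem Convex.reProdIm {s t : Set ℝ} (hs : Convex ℝ s) (ht : Convex ℝ t) :
    Convex ℝ (s ×ℂ t) :=
  (hs.prod ht).linear_preimage equivRealProdLm.toLinearMap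

namespace Complex

variable {E : Type*} [NormedAddCommGroup E] [NormedSpace ℂ E] [Nontrivial E]

theorem re_le_of_forall_mem_frontier_re_le {g : E → ℂ} {U : Set E} (hU : IsBounded U)
    (hg : DiffContOnCl ℂ g U) {C : ℝ} (hC : ∀ z ∈ frontier U, (g z).re ≤ C) {z : E}
    (hz : z ∈ closure U) : (g z).re ≤ C := by
  have hexp := norm_le_of_forall_mem_frontier_norm_le hU
    (differentiable_exp.comp_diffContOnCl hg) (C := Real.exp C)
    (fun w hw ↦ by simpa [norm_exp] using hC w hw) hz
  simpa [norm_exp] using hexp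

theorem im_eq_zero_of_forall_mem_frontier_im_eq_zero {g : E → ℂ} {U : Set E}
    (hU : IsBounded U) (hg : DiffContOnCl ℂ g U) (hfr : ∀ z ∈ frontier U, (g z).im = 0)
    {z : E} (hz : z ∈ closure U) : (g z).im = 0 := by
  have hle := re_le_of_forall_mem_frontier_re_le hU (hg.const_smul (-I)) (C := 0)
    (fun w hw ↦ by simp [hfr w hw]) hz
  have hge := re_le_of_forall_mem_frontier_re_le hU (hg.const_smul I) (C := 0)
    (fun w hw ↦ by simp [hfr w hw]) hz
  exact le_antisymm (by simpa using hle) (by simpa using hge)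

theorem exists_eqOn_closure_of_forall_mem_frontier_im_eq_zero {g : ℂ → ℂ} {U : Set ℂ}
    (hU : IsBounded U) (hUo : IsOpen U) (hUc : IsConnected U) (hg : DiffContOnCl ℂ g U)
    (hfr : ∀ z ∈ frontier U, (g z).im = 0) : ∃ w, EqOn g (fun _ ↦ w) (closure U) := by
  obtain ⟨w, hw⟩ := (hg.differentiableOn.analyticOnNhd hUo).eq_const_of_im_eq_const
    (fun z hz ↦ im_eq_zero_of_forall_mem_frontier_im_eq_zero hU hg hfr (subset_closure hz))
    hUo hUc
  exact ⟨w, EqOn.of_subset_closure hw hg.continuousOn continuousOn_const subset_closure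
    Subset.rfl⟩

theorem eqOn_const_sub_of_swaps_opposite_edges {a b : ℝ} (ha : 0 < a) (hb : 0 < b) {f : ℂ → ℂ}
    (hf : DiffContOnCl ℂ f (Ioo 0 a ×ℂ Ioo 0 b))
    (hre : ∀ z ∈ ({0, a} : Set ℝ) ×ℂ Icc 0 b, (f z).re = a - z.re)
    (him : ∀ z ∈ Icc 0 a ×ℂ ({0, b} : Set ℝ), (f z).im = b - z.im) :
    EqOn f (fun z ↦ a + b * I - z) (Icc 0 a ×ℂ Icc 0 b) := by
  set c : ℂ := a + b * I
  set U := Ioo 0 a ×ℂ Ioo 0 b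
  have hclosure : closure U = Icc 0 a ×ℂ Icc 0 b := by
    rw [closure_reProdIm, closure_Ioo ha.ne, closure_Ioo hb.ne]
  have hg : DiffContOnCl ℂ (fun z ↦ (f z + z - c) ^ 2) U :=
    ⟨((hf.differentiableOn.add differentiableOn_id).sub_const c).pow 2,
      ((hf.continuousOn.add continuousOn_id).sub continuousOn_const).pow 2⟩
  have hfr : ∀ z ∈ frontier U, ((f z + z - c) ^ 2).im = 0 := by
    rw [frontier_reProdIm, closure_Ioo ha.ne, closure_Ioo hb.ne, frontier_Ioo ha, frontier_Ioo hb]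
    rintro z (hz | hz)
    · simp [c, sq, him z hz]
    · simp [c, sq, hre z hz]
  obtain ⟨w, hw⟩ := exists_eqOn_closure_of_forall_mem_frontier_im_eq_zero
    (Metric.isBounded_Ioo 0 a |>.reProdIm (Metric.isBounded_Ioo 0 b))
    (isOpen_Ioo.reProdIm isOpen_Ioo)
    ⟨by simp [ha, hb], (convex_Ioo 0 a).reProdIm (convex_Ioo 0 b) |>.isPreconnected⟩ hg hfr
  have hcorner : f 0 = c := by
    apply Complex.ext
    · simpa [c] using hre 0 (by simp [mem_reProdIm, hb.le])
    · simpa [c] using him 0 (by simp [mem_reProdIm, ha.le])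
  have hw0 : w = 0 := by
    have h0 : (0 : ℂ) ∈ closure U := by
      rw [hclosure]
      simp [mem_reProdIm, ha.le, hb.le]
    simpa [hcorner] using (hw h0).symm
  intro z hz
  have hsq := hw (hclosure ▸ hz)
  simp only [hw0, sq_eq_zero_iff, sub_eq_zero] at hsq
  exact eq_sub_of_add_eq hsq

end Complex

/-- **Uniqueness of the conformal involution of a rectangle switching
opposite sides.** Let `R` be the closed rectangle `[0,a] × [0,b]` in `ℂ`, with left,
right, bottom and top edges `L`, `R'`, `Bo`, `T`. Then there is exactly one continuous
involution `f` of `R`, holomorphic on the interior of `R`, mapping `L` into `R'`,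
`R'` into `L`, `Bo` into `T` and `T` into `Bo`; namely `f(z) = (a + b·i) − z`. -/
theorem unique_conformal_involution_of_rectangle (a b : ℝ) (ha : 0 < a) (hb : 0 < b) :
    ∀ (R L R' Bo T : Set ℂ),
      R = {z : ℂ | 0 ≤ z.re ∧ z.re ≤ a ∧ 0 ≤ z.im ∧ z.im ≤ b} →
      L = {z ∈ R | z.re = 0} → R' = {z ∈ R | z.re = a} →
      Bo = {z ∈ R | z.im = 0} → T = {z ∈ R | z.im = b} →
      ((ContinuousOn (fun z : ℂ => ((a : ℂ) + (b : ℂ) * Complex.I) - z) R ∧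
        Set.MapsTo (fun z : ℂ => ((a : ℂ) + (b : ℂ) * Complex.I) - z) R R ∧
        (∀ z ∈ R, ((a : ℂ) + (b : ℂ) * Complex.I) -
            (((a : ℂ) + (b : ℂ) * Complex.I) - z) = z) ∧
        DifferentiableOn ℂ (fun z : ℂ => ((a : ℂ) + (b : ℂ) * Complex.I) - z)
          (interior R) ∧
        Set.MapsTo (fun z : ℂ => ((a : ℂ) + (b : ℂ) * Complex.I) - z) L R' ∧
        Set.MapsTo (fun z : ℂ => ((a : ℂ) + (b : ℂ) * Complex.I) - z) R' L ∧
        Set.MapsTo (fun z : ℂ => ((a : ℂ) + (b : ℂ) * Complex.I) - z) Bo T ∧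
        Set.MapsTo (fun z : ℂ => ((a : ℂ) + (b : ℂ) * Complex.I) - z) T Bo) ∧
      ∀ f : ℂ → ℂ, ContinuousOn f R → Set.MapsTo f R R → (∀ z ∈ R, f (f z) = z) →
        DifferentiableOn ℂ f (interior R) → Set.MapsTo f L R' → Set.MapsTo f R' L →
        Set.MapsTo f Bo T → Set.MapsTo f T Bo →
        ∀ z ∈ R, f z = ((a : ℂ) + (b : ℂ) * Complex.I) - z) := by
  intro R L R' Bo T hR hL hR' hBo hT
  have hrect : R = Icc 0 a ×ℂ Icc 0 b := by
    ext z
    simp [hR, mem_reProdIm, and_assoc]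
  have hinterior : interior R = Ioo 0 a ×ℂ Ioo 0 b := by
    rw [hrect, interior_reProdIm, interior_Icc, interior_Icc]
  have hclosure : closure (Ioo 0 a ×ℂ Ioo 0 b) = R := by
    rw [closure_reProdIm, closure_Ioo ha.ne, closure_Ioo hb.ne, hrect]
  subst hR hL hR' hBo hT
  constructor
  · refine ⟨by fun_prop, ?_, fun z _ ↦ sub_sub_cancel _ _, by fun_prop, ?_, ?_, ?_, ?_⟩ <;>
    · intro z hz
      simp only [mem_ofPred_eq, sub_re, sub_im, add_re, add_im, ofReal_re, ofReal_im, mul_re,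
        mul_im, I_re, I_im] at hz ⊢
      grind
  · intro f hfc _ _ hfd hLR' hR'L hBoT hTBo z hz
    refine eqOn_const_sub_of_swaps_opposite_edges ha hb ⟨hinterior ▸ hfd, hclosure ▸ hfc⟩ ?_ ?_
      (hrect ▸ hz)
    · rintro z ⟨hzre | hzre, hzim⟩
      · rw [(hLR' ⟨⟨hzre.ge, hzre ▸ ha.le, hzim⟩, hzre⟩).2, hzre, sub_zero]
      · rw [(hR'L ⟨⟨hzre ▸ ha.le, hzre.le, hzim⟩, hzre⟩).2, hzre, sub_self]
    · rintro z ⟨hzre, hzim | hzim⟩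
      · rw [(hBoT ⟨⟨hzre.1, hzre.2, hzim.ge, hzim ▸ hb.le⟩, hzim⟩).2, hzim, sub_zero]
      · rw [(hTBo ⟨⟨hzre.1, hzre.2, hzim ▸ hb.le, hzim.le⟩, hzim⟩).2, hzim, sub_self]
end
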